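/- Let T be a finite tree with at least one edge, let X ⊆ V(T) be a set containing every leaf of T, let Δ be an integer, and let B ⊆ V(T) be a set of vertices each of degree at least Δ − 1 in T. Let c be the number of connected components of the forest obtained from T by deleting the vertices of B that contain at least one vertex of X. Then c > |B|·(Δ − 3)/2. -/

import Mathlib

/-!
Write `d(v)` for the degree in `T` and `c` for the number of components of `T - B` meeting `X`.
A component `Γ` induces a connected graph, hence has at least `|Γ| - 1` edges, so
`∑_{v ∈ Γ} d(v) ≥ 2|Γ| - 2`; if `Γ` avoids `X` it contains no leaf, so all its degrees are at
least `2` and even `∑_{v ∈ Γ} d(v) ≥ 2|Γ|`. Summing over the components gives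
`∑_{v ∉ B} d(v) ≥ 2|V ∖ B| - 2c`, and the handshake identity `∑_v d(v) = 2|V| - 2` of the tree
turns this into `∑_{v ∈ B} d(v) ≤ 2|B| - 2 + 2c`. As `d(v) ≥ Δ - 1` on `B`, `|B|(Δ - 3) ≤ 2c - 2`.
-/

/-- `Γ` is (the vertex set of) a connected component of the subgraph of `G`
induced on `A`: it is a nonempty subset of `A`, connected in the induced sense,
and closed under adjacency within `A`. -/
def IsCompOf {V : Type*} (G : SimpleGraph V) (A Γ : Set V) : Prop :=
  Γ ⊆ A ∧ Γ.Nonempty ∧ (G.induce Γ).Connected ∧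
    ∀ u ∈ Γ, ∀ v ∈ A, G.Adj u v → v ∈ Γ

/-- `compCount G B X` is the number of connected components of the forest
obtained by deleting the vertices of `B` from `G` that contain a vertex
of `X`. -/
noncomputable def compCount {V : Type*} (G : SimpleGraph V) (B X : Set V) : ℕ :=
  {Γ : Set V | IsCompOf G Bᶜ Γ ∧ (Γ ∩ X).Nonempty}.ncard

open SimpleGraph Finset
open scoped Classical

variable {V : Type*} {G : SimpleGraph V} {A B X Γ Γ' : Set V}

namespace IsCompOf

theorem subset_of_mem_of_mem (hΓ : IsCompOf G A Γ) (hΓ' : IsCompOf G A Γ') {v : V}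
    (hv : v ∈ Γ) (hv' : v ∈ Γ') : Γ ⊆ Γ' := by
  suffices h : ∀ {x y : Γ} (_ : (G.induce Γ).Walk x y), (x : V) ∈ Γ' → (y : V) ∈ Γ' from
    fun u hu ↦ h (hΓ.2.2.1.preconnected ⟨v, hv⟩ ⟨u, hu⟩).some hv'
  intro x y p
  induction p with
  | nil => exact id
  | cons hadj _ ih => exact fun hx ↦ ih (hΓ'.2.2.2 _ hx _ (hΓ.1 (Subtype.coe_prop _)) hadj)

theorem eq_of_mem_of_mem (hΓ : IsCompOf G A Γ) (hΓ' : IsCompOf G A Γ') {v : V}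
    (hv : v ∈ Γ) (hv' : v ∈ Γ') : Γ = Γ' :=
  (hΓ.subset_of_mem_of_mem hΓ' hv hv').antisymm (hΓ'.subset_of_mem_of_mem hΓ hv' hv)

end IsCompOf

theorem exists_isCompOf_mem {v : V} (hv : v ∈ A) : ∃ Γ, IsCompOf G A Γ ∧ v ∈ Γ := by
  set Γ := {w | ∃ p : G.Walk v w, ∀ x ∈ p.support, x ∈ A}
  have hvΓ : v ∈ Γ := ⟨.nil, by simpa using hv⟩
  refine ⟨Γ, ⟨fun w ⟨p, hp⟩ ↦ hp w p.end_mem_support, ⟨v, hvΓ⟩, ?_, ?_⟩, hvΓ⟩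
  · refine induce_connected_of_patches v hvΓ fun {w} ⟨p, hp⟩ ↦ ?_
    refine ⟨{x | x ∈ p.support}, fun x hx ↦ ⟨p.takeUntil x hx,
      fun y hy ↦ hp y (p.support_takeUntil_subset_support hx hy)⟩, p.start_mem_support,
      p.end_mem_support, p.connected_induce_support.preconnected _ _⟩
  · rintro u ⟨p, hp⟩ w hw hadj
    exact ⟨p.concat hadj, by simpa [Walk.support_concat, or_imp, forall_and] using And.intro hp hw⟩

section Counting

variable [Fintype V]

noncomputable def compFinset (G : SimpleGraph V) (A : Set V) : Finset (Set V) :=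
  (Set.toFinite {Γ | IsCompOf G A Γ}).toFinset

theorem mem_compFinset : Γ ∈ compFinset G A ↔ IsCompOf G A Γ :=
  Set.Finite.mem_toFinset _

theorem sum_compFinset {M : Type*} [AddCommMonoid M] (f : V → M) :
    ∑ Γ ∈ compFinset G A, ∑ v ∈ Γ.toFinset, f v = ∑ v ∈ A.toFinset, f v := by
  rw [← sum_biUnion]
  · congr 1
    ext v
    simp only [mem_biUnion, mem_compFinset, Set.mem_toFinset]
    exact ⟨fun ⟨Γ, hΓ, hv⟩ ↦ hΓ.1 hv, exists_isCompOf_mem⟩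
  · intro Γ hΓ Γ' hΓ' hne
    refine Finset.disjoint_left.2 fun v hv hv' ↦ hne ?_
    simp only [Finset.mem_coe, Set.mem_toFinset] at *
    exact (mem_compFinset.1 hΓ).eq_of_mem_of_mem (mem_compFinset.1 hΓ') hv hv'

theorem compCount_eq_card_filter :
    compCount G B X = #{Γ ∈ compFinset G Bᶜ | (Γ ∩ X).Nonempty} := by
  rw [compCount, ← Set.ncard_coe_finset]
  congr 1
  ext Γ
  simp [mem_compFinset]

theorem two_mul_ncard_le_sum_degree_add_two (h : (G.induce Γ).Connected) :
    2 * Γ.ncard ≤ ∑ v ∈ Γ.toFinset, G.degree v + 2 := by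
  have hedges := h.card_vert_le_card_edgeSet_add_one
  have hdeg : ∑ x : Γ, (G.induce Γ).degree x ≤ ∑ v ∈ Γ.toFinset, G.degree v := by
    rw [← Finset.sum_set_coe]
    exact sum_le_sum fun x _ ↦ (Copy.induce G Γ).degree_le x
  rw [sum_degrees_eq_twice_card_edges, edgeFinset_card, ← Nat.card_eq_fintype_card] at hdeg
  rw [← Nat.card_coe_set_eq]
  omega

theorem ncard_eq_sum_compFinset : A.ncard = ∑ Γ ∈ compFinset G A, Γ.ncard := by
  simp only [Set.ncard_eq_toFinset_card', card_eq_sum_ones, sum_compFinset]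

theorem two_mul_ncard_le_sum_degree_add_card_filter (hX : ∀ v ∉ X, 2 ≤ G.degree v) :
    2 * A.ncard ≤
      ∑ v ∈ A.toFinset, G.degree v + 2 * #{Γ ∈ compFinset G A | (Γ ∩ X).Nonempty} := by
  rw [card_filter, ncard_eq_sum_compFinset (G := G), ← sum_compFinset, mul_sum, mul_sum,
    ← sum_add_distrib]
  refine sum_le_sum fun Γ hΓ ↦ ?_
  split_ifs with hΓX
  · exact two_mul_ncard_le_sum_degree_add_two (mem_compFinset.1 hΓ).2.2.1
  · have : ∀ v ∈ Γ.toFinset, 2 ≤ G.degree v := fun v hv ↦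
      hX v fun hvX ↦ hΓX ⟨v, Set.mem_toFinset.1 hv, hvX⟩
    simpa [Set.ncard_eq_toFinset_card', mul_comm] using card_nsmul_le_sum _ _ _ this

end Counting

namespace SimpleGraph

variable [Fintype V]

theorem ncard_neighborSet_eq_degree (G : SimpleGraph V) (v : V) :
    (G.neighborSet v).ncard = G.degree v := by
  rw [Set.ncard_eq_toFinset_card', Set.toFinset_card, card_neighborSet_eq_degree]

theorem IsTree.sum_degree_add_two (hG : G.IsTree) :
    ∑ v, G.degree v + 2 = 2 * Fintype.card V := by
  rw [sum_degrees_eq_twice_card_edges, ← hG.card_edgeFinset]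
  ring

theorem IsTree.sum_degree_add_two_le (hG : G.IsTree) (hX : ∀ v ∉ X, 2 ≤ G.degree v) :
    ∑ v ∈ B.toFinset, G.degree v + 2 ≤ 2 * B.ncard + 2 * compCount G B X := by
  have hcompl := two_mul_ncard_le_sum_degree_add_card_filter (G := G) (A := Bᶜ) hX
  rw [← compCount_eq_card_filter, Set.toFinset_compl] at hcompl
  have hsplit := sum_add_sum_compl B.toFinset (G.degree ·)
  have hcard : B.ncard + Bᶜ.ncard = Fintype.card V := by
    rw [Set.ncard_add_ncard_compl, Nat.card_eq_fintype_card]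
  have hhandshake := hG.sum_degree_add_two
  omega

end SimpleGraph

/-- In a finite tree `T` with at least one edge, if `X`
contains all leaves and every vertex of `B` has degree at least `Δ − 1`, then
the number `c` of components of `T − B` containing a vertex of `X` satisfies
`c > |B|·(Δ − 3)/2`. -/
theorem stmt_10 (V : Type) [Fintype V] (T : SimpleGraph V)
    (hT : T.IsTree) (hE : T.edgeSet.Nonempty)
    (X : Set V) (hX : ∀ v, (T.neighborSet v).ncard = 1 → v ∈ X)
    (Δ : ℤ) (B : Set V)
    (hB : ∀ v ∈ B, (Δ : ℝ) - 1 ≤ ((T.neighborSet v).ncard : ℝ)) :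
    (B.ncard : ℝ) * ((Δ : ℝ) - 3) / 2 < (compCount T B X : ℝ) := by
  obtain ⟨e, he⟩ := hE
  have : Nontrivial V := by
    induction e using Sym2.ind with
    | _ u w => exact (T.mem_edgeSet.1 he).nontrivial
  have hleaf : ∀ v ∉ X, 2 ≤ T.degree v := fun v hv ↦ by
    have hpos := hT.connected.preconnected.degree_pos_of_nontrivial v
    have hne : T.degree v ≠ 1 := fun h ↦ hv (hX v (by rw [ncard_neighborSet_eq_degree, h]))
    omega
  have hBdeg : (B.ncard : ℝ) * (Δ - 1) ≤ ∑ v ∈ B.toFinset, (T.degree v : ℝ) := by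
    rw [Set.ncard_eq_toFinset_card', ← nsmul_eq_mul]
    exact card_nsmul_le_sum _ _ _ fun v hv ↦
      ncard_neighborSet_eq_degree T v ▸ hB v (Set.mem_toFinset.1 hv)
  have hbound : ((∑ v ∈ B.toFinset, T.degree v + 2 : ℕ) : ℝ) ≤
      ((2 * B.ncard + 2 * compCount T B X : ℕ) : ℝ) := by
    exact_mod_cast hT.sum_degree_add_two_le hleaf
  push_cast at hbound
  linarith
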